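/- As f → +∞, the average velocity satisfies V(f) = f·(1 − (1/f²)·∫₀¹ (φ'(x))² dx) + O(1/f²); that is, V(f) − f + (1/f)·∫₀¹ (φ'(x))² dx is O(f⁻²) as f → +∞. -/

import Mathlib

open MeasureTheory intervalIntegral Asymptotics Filter

noncomputable def w0 (φ : ℝ → ℝ) (f x : ℝ) : ℝ :=
  ∫ s in (0:ℝ)..1, Real.exp (φ (x + s) - φ x - f * s)

noncomputable def M0 (φ : ℝ → ℝ) (f : ℝ) : ℝ := ∫ x in (0:ℝ)..1, w0 φ f x

noncomputable def w1 (φ : ℝ → ℝ) (f x : ℝ) : ℝ :=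
  ∫ s in (0:ℝ)..1, (w0 φ f (x + s)) ^ 2 * Real.exp (φ (x + s) - φ x - f * s)

noncomputable def M1 (φ : ℝ → ℝ) (f : ℝ) : ℝ := ∫ x in (0:ℝ)..1, w1 φ f x

/-!
Integrating by parts in `s` against `e^{-f s}`, the boundary terms cancelling by periodicity,
gives for every periodic `C¹` weight `ψ`
`∫₀¹ ψ(x+s) e^{φ(x+s)-φ(x)-fs} ds = ψ(x)(1-e^{-f})/f + (1/f) ∫₀¹ (ψ' + ψφ')(x+s) e^{…} ds`.
Starting from `ψ = 1` and applying this three times, then averaging over `x` (the averages of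
`φ'` and `φ''` vanish), yields `M₀(f) = (1-e^{-f})(1/f + ∫φ'²/f³) + O(f⁻⁴)`, because a tilted
integral of a bounded weight is `O(1/f)`. Inverting this expansion gives the one for `V(f)`.
-/

open Real Function Topology

theorem Function.Periodic.deriv {g : ℝ → ℝ} {c : ℝ} (hg : Periodic g c) :
    Periodic (_root_.deriv g) c := fun x => by
  rw [← deriv_comp_add_const, funext hg]

theorem Function.Periodic.exists_forall_abs_le {g : ℝ → ℝ} {c : ℝ} (hg : Periodic g c)
    (hc : c ≠ 0) (hgc : Continuous g) : ∃ B, ∀ y, |g y| ≤ B := by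
  obtain ⟨B, hB⟩ := isBounded_iff_forall_norm_le.mp (hg.isBounded_of_continuous hc hgc)
  exact ⟨B, fun y => hB _ ⟨y, rfl⟩⟩

theorem Function.Periodic.integral_deriv_eq_zero {g : ℝ → ℝ} {c : ℝ} (hg : Periodic g c)
    (hg1 : ContDiff ℝ 1 g) : ∫ x in (0:ℝ)..c, _root_.deriv g x = 0 := by
  rw [integral_deriv_eq_sub (fun x _ => (hg1.differentiable one_ne_zero).differentiableAt)
    ((hg1.continuous_deriv le_rfl).intervalIntegrable _ _), ← zero_add c, hg, sub_self]

theorem integral_mul_exp_neg_mul {u u' : ℝ → ℝ}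
    (hu : ∀ s ∈ Set.uIcc (0:ℝ) 1, HasDerivAt u (u' s) s) (hu' : IntervalIntegrable u' volume 0 1)
    (h01 : u 1 = u 0) {f : ℝ} (hf : f ≠ 0) :
    ∫ s in (0:ℝ)..1, u s * exp (-(f * s))
      = u 0 * ((1 - exp (-f)) / f) + (∫ s in (0:ℝ)..1, u' s * exp (-(f * s))) / f := by
  have hv : ∀ s ∈ Set.uIcc (0:ℝ) 1,
      HasDerivAt (fun t => -exp (-(f * t)) / f) (exp (-(f * s))) s := fun s _ => by
    have hlin : HasDerivAt (fun t => -(f * t)) (-f) s := by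
      simpa using ((hasDerivAt_id s).const_mul f).fun_neg
    exact (hlin.exp.neg.div_const f).congr_deriv (by field_simp)
  rw [integral_mul_deriv_eq_deriv_mul hu hv hu'
    ((by fun_prop : Continuous _).intervalIntegrable _ _), h01, ← intervalIntegral.integral_div]
  simp only [mul_one, mul_zero, neg_zero, exp_zero, mul_neg, neg_div, intervalIntegral.integral_neg,
    ← mul_div_assoc]
  ring

noncomputable def tiltedIntegral (φ ψ : ℝ → ℝ) (f x : ℝ) : ℝ :=
  ∫ s in (0:ℝ)..1, ψ (x + s) * exp (φ (x + s) - φ x - f * s)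

noncomputable def tiltedMean (φ ψ : ℝ → ℝ) (f : ℝ) : ℝ :=
  ∫ x in (0:ℝ)..1, tiltedIntegral φ ψ f x

/-- `twistedDeriv φ ψ = e^{-φ} (e^{φ} ψ)'`: integrating by parts against `e^{-f s}` moves this
derivative onto the weight `ψ` of a tilted integral. -/
noncomputable def twistedDeriv (φ ψ : ℝ → ℝ) (y : ℝ) : ℝ :=
  deriv ψ y + ψ y * deriv φ y

section

variable {φ ψ : ℝ → ℝ}

theorem twistedDeriv_one : twistedDeriv φ 1 = deriv φ := by
  funext y
  simp [twistedDeriv]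

theorem periodic_twistedDeriv {c : ℝ} (hφ : Periodic φ c) (hψ : Periodic ψ c) :
    Periodic (twistedDeriv φ ψ) c := fun y => by
  simp only [twistedDeriv, hψ.deriv y, hφ.deriv y, hψ y]

theorem contDiff_twistedDeriv {n : WithTop ℕ∞} (hφ : ContDiff ℝ (n + 1) φ)
    (hψ : ContDiff ℝ (n + 1) ψ) : ContDiff ℝ n (twistedDeriv φ ψ) :=
  hψ.deriv'.add ((hψ.of_le le_self_add).mul hφ.deriv')

theorem integral_twistedDeriv (hφ : ContDiff ℝ 1 φ) (hψ : ContDiff ℝ 1 ψ) (hψp : Periodic ψ 1) :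
    ∫ x in (0:ℝ)..1, twistedDeriv φ ψ x = ∫ x in (0:ℝ)..1, ψ x * deriv φ x := by
  have hφ' := hφ.continuous_deriv le_rfl
  have hψ' := hψ.continuous_deriv le_rfl
  simp only [twistedDeriv]
  rw [intervalIntegral.integral_add (hψ'.intervalIntegrable _ _)
    ((hψ.continuous.fun_mul hφ').intervalIntegrable _ _), hψp.integral_deriv_eq_zero hψ,
    zero_add]

theorem continuous_tiltedIntegral (hφ : Continuous φ) (hψ : Continuous ψ) (f : ℝ) :
    Continuous (tiltedIntegral φ ψ f) := by
  unfold tiltedIntegral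
  fun_prop

theorem tiltedIntegral_eq (hφ : ContDiff ℝ 1 φ) (hφp : Periodic φ 1) (hψ : ContDiff ℝ 1 ψ)
    (hψp : Periodic ψ 1) {f : ℝ} (hf : f ≠ 0) (x : ℝ) :
    tiltedIntegral φ ψ f x
      = ψ x * ((1 - exp (-f)) / f) + tiltedIntegral φ (twistedDeriv φ ψ) f x / f := by
  have hsplit : ∀ (χ : ℝ → ℝ) (s : ℝ), χ (x + s) * exp (φ (x + s) - φ x - f * s)
      = χ (x + s) * exp (φ (x + s) - φ x) * exp (-(f * s)) := fun χ s => by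
    rw [sub_eq_add_neg (φ (x + s) - φ x), exp_add, mul_assoc]
  have hu : ∀ s, HasDerivAt (fun t => ψ (x + t) * exp (φ (x + t) - φ x))
      (twistedDeriv φ ψ (x + s) * exp (φ (x + s) - φ x)) s := fun s => by
    have hd : ∀ {g : ℝ → ℝ}, ContDiff ℝ 1 g → ∀ y, HasDerivAt g (deriv g y) y :=
      fun hg y => ((hg.differentiable one_ne_zero) y).hasDerivAt
    exact (((hd hψ (x + s)).mul ((hd hφ (x + s)).sub_const (φ x)).exp).congr_deriv
      (by rw [twistedDeriv]; ring)).comp_const_add x s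
  have hu' : Continuous fun s => twistedDeriv φ ψ (x + s) * exp (φ (x + s) - φ x) := by
    have := (contDiff_twistedDeriv (n := 0) hφ hψ).continuous
    fun_prop
  simp only [tiltedIntegral, hsplit]
  rw [integral_mul_exp_neg_mul (fun s _ => hu s) (hu'.intervalIntegrable _ _) (by
    simp only [add_zero, hψp x, hφp x]) hf]
  simp

theorem tiltedMean_eq (hφ : ContDiff ℝ 1 φ) (hφp : Periodic φ 1) (hψ : ContDiff ℝ 1 ψ)
    (hψp : Periodic ψ 1) {f : ℝ} (hf : f ≠ 0) :
    tiltedMean φ ψ f = (∫ x in (0:ℝ)..1, ψ x) * ((1 - exp (-f)) / f)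
      + tiltedMean φ (twistedDeriv φ ψ) f / f := by
  have hcont := continuous_tiltedIntegral hφ.continuous
    (contDiff_twistedDeriv (n := 0) hφ hψ).continuous f
  rw [tiltedMean,
    intervalIntegral.integral_congr fun x _ => tiltedIntegral_eq hφ hφp hψ hψp hf x,
    intervalIntegral.integral_add ((hψ.continuous.mul_const _).intervalIntegrable _ _)
      ((hcont.div_const f).intervalIntegrable _ _),
    intervalIntegral.integral_mul_const, intervalIntegral.integral_div, tiltedMean]

theorem integral_exp_neg_mul_le {f : ℝ} (hf : 0 < f) :
    ∫ s in (0:ℝ)..1, exp (-(f * s)) ≤ 1 / f := by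
  have h := integral_mul_exp_neg_mul (u := fun _ => 1) (u' := fun _ => 0)
    (fun s _ => hasDerivAt_const s 1) intervalIntegrable_const rfl hf.ne'
  simp only [one_mul, zero_mul, intervalIntegral.integral_zero, zero_div, add_zero] at h
  rw [h]
  gcongr
  linarith [exp_pos (-f)]

theorem abs_tiltedIntegral_le {Bφ Bψ : ℝ} (hφ : ∀ y, |φ y| ≤ Bφ) (hψ : ∀ y, |ψ y| ≤ Bψ)
    {f : ℝ} (hf : 0 < f) (x : ℝ) : |tiltedIntegral φ ψ f x| ≤ Bψ * exp (2 * Bφ) / f := by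
  have hBψ : 0 ≤ Bψ := (abs_nonneg _).trans (hψ 0)
  have hpointwise : ∀ s, ‖ψ (x + s) * exp (φ (x + s) - φ x - f * s)‖
      ≤ Bψ * exp (2 * Bφ) * exp (-(f * s)) := fun s => by
    rw [Real.norm_eq_abs, abs_mul, abs_exp, mul_assoc, ← exp_add]
    have := abs_le.mp (hφ (x + s))
    have := abs_le.mp (hφ x)
    gcongr
    · exact hψ _
    · linarith
  calc |tiltedIntegral φ ψ f x|
      ≤ ∫ s in (0:ℝ)..1, Bψ * exp (2 * Bφ) * exp (-(f * s)) :=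
        intervalIntegral.norm_integral_le_of_norm_le zero_le_one
          (ae_of_all _ fun s _ => hpointwise s) (Continuous.intervalIntegrable (by fun_prop) _ _)
    _ = Bψ * exp (2 * Bφ) * ∫ s in (0:ℝ)..1, exp (-(f * s)) :=
        intervalIntegral.integral_const_mul _ _
    _ ≤ Bψ * exp (2 * Bφ) * (1 / f) := by gcongr; exact integral_exp_neg_mul_le hf
    _ = Bψ * exp (2 * Bφ) / f := mul_one_div _ _

theorem tiltedMean_isBigO {Bφ Bψ : ℝ} (hφ : ∀ y, |φ y| ≤ Bφ) (hψ : ∀ y, |ψ y| ≤ Bψ) :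
    tiltedMean φ ψ =O[atTop] fun f => f⁻¹ := by
  refine IsBigO.of_bound (Bψ * exp (2 * Bφ)) ?_
  filter_upwards [eventually_gt_atTop 0] with f hf
  calc ‖tiltedMean φ ψ f‖ ≤ Bψ * exp (2 * Bφ) / f * |1 - 0| :=
        intervalIntegral.norm_integral_le_of_norm_le_const
          fun x _ => abs_tiltedIntegral_le hφ hψ hf x
    _ = Bψ * exp (2 * Bφ) * ‖f⁻¹‖ := by
        rw [norm_inv, Real.norm_of_nonneg hf.le]; simp [div_eq_mul_inv]

end

theorem M0_eq_tiltedMean (φ : ℝ → ℝ) (f : ℝ) : M0 φ f = tiltedMean φ 1 f := by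
  simp [M0, w0, tiltedMean, tiltedIntegral]

theorem M0_expansion {φ : ℝ → ℝ} (hφ : ContDiff ℝ 3 φ) (hφp : Periodic φ 1) {f : ℝ}
    (hf : f ≠ 0) :
    M0 φ f = (1 - exp (-f)) / f + (∫ x in (0:ℝ)..1, deriv φ x ^ 2) * ((1 - exp (-f)) / f ^ 3)
      + tiltedMean φ (twistedDeriv φ (twistedDeriv φ (deriv φ))) f / f ^ 3 := by
  have h1 : ContDiff ℝ 1 φ := hφ.of_le (by norm_num)
  have hψ₁ : ContDiff ℝ 2 (deriv φ) := hφ.deriv'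
  have hψ₂ : ContDiff ℝ 1 (twistedDeriv φ (deriv φ)) :=
    contDiff_twistedDeriv (hφ.of_le (by norm_num)) hψ₁
  have hp₁ := hφp.deriv
  rw [M0_eq_tiltedMean, tiltedMean_eq (ψ := 1) h1 hφp contDiff_const (fun _ => rfl) hf,
    twistedDeriv_one,
    tiltedMean_eq h1 hφp (hψ₁.of_le (by norm_num)) hp₁ hf,
    tiltedMean_eq h1 hφp hψ₂ (periodic_twistedDeriv hφp hp₁) hf,
    integral_twistedDeriv h1 (hψ₁.of_le (by norm_num)) hp₁, hφp.integral_deriv_eq_zero h1]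
  simp only [Pi.one_apply, intervalIntegral.integral_const, sub_zero, smul_eq_mul, ← sq]
  field_simp
  ring

theorem isBigO_div_sub_of_expansion {A E M : ℝ → ℝ} {C : ℝ} (hA : Tendsto A atTop (𝓝 1))
    (hE : E =O[atTop] fun f => f⁻¹)
    (hM : ∀ᶠ f in atTop, M f = A f / f + C * (A f / f ^ 3) + E f / f ^ 3) :
    (fun f => A f / M f - f + 1 / f * C) =O[atTop] fun f => 1 / f ^ 2 := by
  have hinv : (fun f : ℝ => f⁻¹) =O[atTop] fun _ => (1 : ℝ) :=
    tendsto_inv_atTop_zero.isBigO_one ℝ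
  have hB : (fun f => C * A f + E f) =O[atTop] fun _ => (1 : ℝ) :=
    ((hA.isBigO_one ℝ).const_mul_left C).add (hE.trans hinv)
  have hfE : (fun f => f * E f) =O[atTop] fun _ => (1 : ℝ) :=
    ((isBigO_refl (fun f : ℝ => f) atTop).mul hE).congr' EventuallyEq.rfl
      ((eventually_ne_atTop 0).mono fun f hf => mul_inv_cancel₀ hf)
  have hg : Tendsto (fun f => f * M f) atTop (𝓝 1) := by
    have h0 : Tendsto (fun f => (C * A f + E f) * (f ^ 2)⁻¹) atTop (𝓝 0) :=
      (hB.mul (isBigO_refl (fun f : ℝ => (f ^ 2)⁻¹) atTop)).trans_tendsto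
        (by simpa [Pi.inv_def] using (tendsto_pow_atTop two_ne_zero).inv_tendsto_atTop)
    have hsum : Tendsto (fun f => A f + (C * A f + E f) * (f ^ 2)⁻¹) atTop (𝓝 1) := by
      simpa using hA.add h0
    refine hsum.congr' ?_
    filter_upwards [hM, eventually_ne_atTop 0] with f hMf hf
    rw [hMf]
    field_simp
    ring
  have hbracket : (fun f => C * (C * A f + E f) * f⁻¹ - f * E f) =O[atTop] fun _ => (1 : ℝ) :=
    (((hB.const_mul_left C).mul hinv).congr_right fun _ => mul_one 1).sub hfE
  refine (((hbracket.mul ((hg.inv₀ one_ne_zero).isBigO_one ℝ)).mul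
    (isBigO_refl (fun f : ℝ => 1 / f ^ 2) atTop)).congr' ?_ ?_)
  · filter_upwards [hM, eventually_ne_atTop 0, hg.eventually_ne one_ne_zero] with f hMf hf hg0
    have hM0 : M f ≠ 0 := right_ne_zero_of_mul hg0
    have hden : f ^ 3 * M f = f ^ 2 * A f + (C * A f + E f) := by
      rw [hMf]
      field_simp
      ring
    field_simp
    linear_combination (f ^ 2 - C) * hden
  · exact Eventually.of_forall fun f => by simp

/-- As `f → +∞`, the average velocity `V(f) = (1 − e^{−f})/M₀(f)`
satisfies `V(f) = f·(1 − (1/f²)·∫₀¹ (φ'(x))² dx) + O(1/f²)`. -/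
theorem stmt_16 (φ : ℝ → ℝ) (hφ : ContDiff ℝ 3 φ) (hφper : ∀ x, φ (x + 1) = φ x)
    (V : ℝ → ℝ) (hV : ∀ f, V f = (1 - Real.exp (-f)) / M0 φ f) :
    (fun f => V f - f + (1 / f) * ∫ x in (0:ℝ)..1, (deriv φ x) ^ 2)
      =O[atTop] (fun f => 1 / f ^ 2) := by
  have hφp : Periodic φ 1 := hφper
  have hJ : ContDiff ℝ 0 (twistedDeriv φ (twistedDeriv φ (deriv φ))) :=
    contDiff_twistedDeriv (hφ.of_le (by norm_num))
      (contDiff_twistedDeriv (hφ.of_le (by norm_num)) hφ.deriv')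
  obtain ⟨Bφ, hBφ⟩ := hφp.exists_forall_abs_le one_ne_zero hφ.continuous
  obtain ⟨BJ, hBJ⟩ := (periodic_twistedDeriv hφp (periodic_twistedDeriv hφp hφp.deriv))
    |>.exists_forall_abs_le one_ne_zero hJ.continuous
  have hA : Tendsto (fun f => 1 - exp (-f)) atTop (𝓝 1) := by
    simpa using tendsto_exp_neg_atTop_nhds_zero.const_sub 1
  refine (isBigO_div_sub_of_expansion hA (tiltedMean_isBigO hBφ hBJ) ?_).congr_left
    fun f => by rw [hV]
  filter_upwards [eventually_ne_atTop 0] with f hf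
  exact M0_expansion hφ hφp hf
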